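/- Let d ≥ 2, n ≥ 2 and let 𝒜 be an invertible linear map on (ℂᵈ)^{⊗(n−1)} ≅ ℂ^{d^{n−1}}. Let 𝒱 ⊆ (ℂᵈ)^{⊗n} be the orthogonal complement of the span of the vectors (1, α, …, α^{d−1}) ⊗ 𝒜(1, α, α², …, α^{d^{n−1}−1}) over all α ∈ ℂ. Then: (i) dim 𝒱 = (d^{n−1} − 1)(d − 1); (ii) 𝒱 contains no nonzero vector of the form v ⊗ w with v ∈ ℂᵈ (the first tensor factor) and w ∈ (ℂᵈ)^{⊗(n−1)}; in particular 𝒱 contains no nonzero fully product vector, i.e., 𝒱 is a completely entangled subspace of the maximal possible dimension for a GES in (ℂᵈ)^{⊗n}. -/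

import Mathlib

/-!
Write `N = d ^ m + d - 1`. Expanding the powers, the curve is `α ↦ G (1, α, …, α ^ (N - 1))`
for a linear map `G : ℂ ^ N → (ℂᵈ)^{⊗(m+1)}`, whose coordinate at `j ⊗ K` is
`∑_J A K J c (j + baseExp J)`. Since `A` is invertible and every `k < N` has the form
`j + baseExp J`, `G` is injective; the moment curve spans `ℂ ^ N` (Vandermonde), so the span of
the curve has dimension `N` and its orthogonal complement `d ^ (m + 1) - N = (d ^ m - 1)(d - 1)`.

For a vector `v ⊗ w`, the inner product with the curve point at `α` factors, with `β = conj α`,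
as `p(β) q(β)`, where `p = ∑ v j X ^ j` and `q = ∑ (Aᴴ w) J X ^ baseExp J`. If it vanishes for
all `α`, then `p q = 0`; as the exponents in `p` and in `q` are distinct, `v = 0` or `Aᴴ w = 0`.
-/

noncomputable section

/-- The base-`d` exponent `c₂d^{n-2} + ⋯ + c_n d⁰` of the string `J` (of length `m`). -/
def baseExp (d m : ℕ) (J : Fin m → Fin d) : ℕ :=
  ∑ t : Fin m, (J t : ℕ) * d ^ (m - 1 - (t : ℕ))

/-- The vectors `(1,α,…,α^{d−1}) ⊗ 𝒜(1,α,α²,…,α^{d^m−1})` spanning `𝒱^⊥`, for `m + 1`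
parties each holding a `d`-level system (`𝒜` acts on the last `m` parties). -/
def quditCurve (d m : ℕ) (A : Matrix (Fin m → Fin d) (Fin m → Fin d) ℂ) (α : ℂ) :
    EuclideanSpace ℂ (Fin (m + 1) → Fin d) :=
  WithLp.toLp 2 (fun f => α ^ ((f 0 : ℕ)) * A.mulVec (fun J => α ^ baseExp d m J) (fun t => f t.succ))

open Polynomial Module Submodule Matrix

theorem span_range_powers_eq_top (K : Type*) [Field K] [Infinite K] (N : ℕ) :
    span K (Set.range fun x : K => fun k : Fin N => x ^ (k : ℕ)) = ⊤ := by
  classical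
  let v : Fin N → K := fun i => Infinite.natEmbedding K i
  have hv : Function.Injective v := (Infinite.natEmbedding K).injective.comp Fin.val_injective
  have hli : LinearIndependent K (vandermonde v).row :=
    linearIndependent_rows_of_det_ne_zero (det_vandermonde_ne_zero_iff.2 hv)
  refine eq_top_mono (span_mono ?_) (hli.span_eq_top_of_card_eq_finrank' (by simp))
  rintro _ ⟨i, rfl⟩
  exact ⟨v i, rfl⟩

theorem Polynomial.eq_zero_of_sum_C_mul_X_pow_eq_zero {R ι : Type*} [Semiring R] [Fintype ι]
    {e : ι → ℕ} (he : Function.Injective e) {c : ι → R} (h : ∑ i, C (c i) * X ^ e i = 0) :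
    c = 0 := by
  classical
  funext i
  simpa [finsetSum_coeff, coeff_C_mul_X_pow, he.eq_iff] using congrArg (coeff · (e i)) h

def baseExpEquiv (d m : ℕ) : (Fin m → Fin d) ≃ Fin (d ^ m) :=
  (Fin.revPerm.arrowCongr (Equiv.refl _)).trans finFunctionFinEquiv

theorem val_baseExpEquiv (d m : ℕ) (J : Fin m → Fin d) :
    (baseExpEquiv d m J : ℕ) = baseExp d m J := by
  rw [baseExpEquiv, Equiv.trans_apply, finFunctionFinEquiv_apply, baseExp,
    ← Equiv.sum_comp Fin.revPerm]
  refine Finset.sum_congr rfl fun t _ => ?_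
  simp only [Equiv.arrowCongr_apply, Function.comp_apply, Equiv.refl_apply,
    Fin.revPerm_symm, Fin.revPerm_apply, Fin.rev_rev, Fin.val_rev]
  congr 2
  omega

theorem baseExp_lt (d m : ℕ) (J : Fin m → Fin d) : baseExp d m J < d ^ m :=
  val_baseExpEquiv d m J ▸ (baseExpEquiv d m J).isLt

theorem baseExp_injective (d m : ℕ) : Function.Injective (baseExp d m) := fun J J' h =>
  (baseExpEquiv d m).injective <| Fin.ext <| by rw [val_baseExpEquiv, val_baseExpEquiv, h]

def consTensor {𝕜 X : Type*} [RCLike 𝕜] {m : ℕ} (v : X → 𝕜) (w : (Fin m → X) → 𝕜) :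
    EuclideanSpace 𝕜 (Fin (m + 1) → X) :=
  WithLp.toLp 2 fun f => v (f 0) * w (Fin.tail f)

theorem inner_consTensor {𝕜 X : Type*} [RCLike 𝕜] [Fintype X] {m : ℕ} (v v' : X → 𝕜)
    (w w' : (Fin m → X) → 𝕜) :
    inner 𝕜 (consTensor v w) (consTensor v' w') = (star v ⬝ᵥ v') * (star w ⬝ᵥ w') := by
  rw [PiLp.inner_apply, ← (Fin.consEquiv fun _ => X).sum_comp, Fintype.sum_prod_type,
    dotProduct, dotProduct, Finset.sum_mul_sum]
  refine Finset.sum_congr rfl fun j _ => Finset.sum_congr rfl fun K _ => ?_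
  simp [consTensor, Fin.consEquiv, RCLike.inner_apply]
  ring

def expIndex (d m : ℕ) (j : Fin d) (J : Fin m → Fin d) : Fin (d ^ m + d - 1) :=
  ⟨j + baseExp d m J, by have := baseExp_lt d m J; omega⟩

theorem exists_expIndex_eq {d : ℕ} (hd : 0 < d) (m : ℕ) (k : Fin (d ^ m + d - 1)) :
    ∃ j J, expIndex d m j J = k := by
  have hdm : 0 < d ^ m := Nat.pow_pos hd
  let i := min (k : ℕ) (d - 1)
  refine ⟨⟨i, by omega⟩, (baseExpEquiv d m).symm ⟨k - i, by omega⟩, Fin.ext ?_⟩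
  simp only [expIndex, ← val_baseExpEquiv, Equiv.apply_symm_apply]
  omega

def quditCurveLin (d m : ℕ) (A : Matrix (Fin m → Fin d) (Fin m → Fin d) ℂ) :
    (Fin (d ^ m + d - 1) → ℂ) →ₗ[ℂ] EuclideanSpace ℂ (Fin (m + 1) → Fin d) where
  toFun c := WithLp.toLp 2 fun f => (A *ᵥ fun J => c (expIndex d m (f 0) J)) (Fin.tail f)
  map_add' c c' := by ext f; simp [mulVec, dotProduct, mul_add, Finset.sum_add_distrib]
  map_smul' a c := by ext f; simp [mulVec, dotProduct, Finset.mul_sum, mul_left_comm]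

section

variable {d m : ℕ} {A : Matrix (Fin m → Fin d) (Fin m → Fin d) ℂ}

theorem quditCurve_eq_consTensor (α : ℂ) : quditCurve d m A α =
    consTensor (fun j : Fin d => α ^ (j : ℕ)) (A *ᵥ fun J => α ^ baseExp d m J) := rfl

theorem inner_quditCurve_consTensor (α : ℂ) (v : Fin d → ℂ) (w : (Fin m → Fin d) → ℂ) :
    inner ℂ (quditCurve d m A α) (consTensor v w) =
      (∑ j : Fin d, v j * (starRingEnd ℂ α) ^ (j : ℕ)) *
        ∑ J, (Aᴴ *ᵥ w) J * (starRingEnd ℂ α) ^ baseExp d m J := by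
  rw [quditCurve_eq_consTensor, inner_consTensor, star_mulVec, ← dotProduct_mulVec,
    dotProduct_comm, dotProduct_comm (star _)]
  simp [dotProduct]

theorem consTensor_eq_zero_of_mem_orthogonal (hA : IsUnit A.det)
    {v : Fin d → ℂ} {w : (Fin m → Fin d) → ℂ}
    (h : consTensor v w ∈ (span ℂ (Set.range (quditCurve d m A)))ᗮ) : consTensor v w = 0 := by
  set p : ℂ[X] := ∑ j : Fin d, C (v j) * X ^ (j : ℕ)
  set q : ℂ[X] := ∑ J, C ((Aᴴ *ᵥ w) J) * X ^ baseExp d m J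
  have hpq : p * q = 0 := Polynomial.funext fun β => by
    have := inner_right_of_mem_orthogonal (subset_span (Set.mem_range_self (starRingEnd ℂ β))) h
    rw [inner_quditCurve_consTensor, Complex.conj_conj] at this
    simpa [p, q, eval_finsetSum] using this
  rcases mul_eq_zero.1 hpq with hp | hq
  · have hv := eq_zero_of_sum_C_mul_X_pow_eq_zero Fin.val_injective hp
    ext f
    simp [consTensor, hv]
  · have hAw := eq_zero_of_sum_C_mul_X_pow_eq_zero (baseExp_injective d m) hq
    have hw : w = 0 := eq_zero_of_mulVec_eq_zero
      (by simpa [det_conjTranspose] using hA.ne_zero) hAw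
    ext f
    simp [consTensor, hw]

theorem quditCurve_eq_quditCurveLin (α : ℂ) :
    quditCurve d m A α = quditCurveLin d m A fun k => α ^ (k : ℕ) := by
  ext f
  simp only [quditCurve, quditCurveLin, LinearMap.coe_mk, AddHom.coe_mk, expIndex, mulVec,
    dotProduct, Finset.mul_sum, pow_add, Fin.tail_def]
  refine Finset.sum_congr rfl fun J _ => ?_
  ring

theorem quditCurveLin_injective (hd : 0 < d) (hA : IsUnit A.det) :
    Function.Injective (quditCurveLin d m A) := by
  rw [← LinearMap.ker_eq_bot, LinearMap.ker_eq_bot']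
  intro c hc
  have hrow (j : Fin d) : (fun J => c (expIndex d m j J)) = 0 :=
    eq_zero_of_mulVec_eq_zero hA.ne_zero <| funext fun K => by
      simpa [quditCurveLin] using congrArg (· (Fin.cons j K)) hc
  funext k
  obtain ⟨j, J, rfl⟩ := exists_expIndex_eq hd m k
  exact congrFun (hrow j) J

theorem finrank_span_range_quditCurve (hd : 0 < d) (hA : IsUnit A.det) :
    finrank ℂ (span ℂ (Set.range (quditCurve d m A))) = d ^ m + d - 1 := by
  have hrange : span ℂ (Set.range (quditCurve d m A)) = LinearMap.range (quditCurveLin d m A) := by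
    rw [LinearMap.range_eq_map, ← span_range_powers_eq_top, LinearMap.map_span, ← Set.range_comp]
    congr 2
    funext α
    exact quditCurve_eq_quditCurveLin α
  rw [hrange, LinearMap.finrank_range_of_inj (quditCurveLin_injective hd hA), finrank_fin_fun]

theorem finrank_orthogonal_span_range_quditCurve (hd : 0 < d) (hA : IsUnit A.det) :
    finrank ℂ (span ℂ (Set.range (quditCurve d m A)))ᗮ = (d ^ m - 1) * (d - 1) := by
  have h := (span ℂ (Set.range (quditCurve d m A))).finrank_add_finrank_orthogonal
  rw [finrank_span_range_quditCurve hd hA, finrank_euclideanSpace, Fintype.card_fun,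
    Fintype.card_fin, Fintype.card_fin, pow_succ] at h
  obtain ⟨a, ha⟩ : ∃ a, d ^ m = a + 1 := ⟨d ^ m - 1, by have := Nat.pow_pos (n := m) hd; omega⟩
  obtain ⟨b, rfl⟩ : ∃ b, d = b + 1 := ⟨d - 1, by omega⟩
  rw [ha] at h ⊢
  simp only [Nat.add_sub_cancel] at h ⊢
  ring_nf at h
  omega

end

theorem qudit_CES_lemma_general (d m : ℕ) (hd : 2 ≤ d)
    (A : Matrix (Fin m → Fin d) (Fin m → Fin d) ℂ) (hA : IsUnit A.det) :
    Module.finrank ℂ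
      ((Submodule.span ℂ (Set.range (quditCurve d m A)))ᗮ :
        Submodule ℂ (EuclideanSpace ℂ (Fin (m + 1) → Fin d))) = (d ^ m - 1) * (d - 1) ∧
    (∀ ψ ∈ (Submodule.span ℂ (Set.range (quditCurve d m A)))ᗮ,
      (∃ (v : Fin d → ℂ) (w : (Fin m → Fin d) → ℂ),
        ∀ f : Fin (m + 1) → Fin d, ψ f = v (f 0) * w (fun t => f t.succ)) → ψ = 0) ∧
    (∀ ψ ∈ (Submodule.span ℂ (Set.range (quditCurve d m A)))ᗮ,
      (∃ vs : Fin (m + 1) → Fin d → ℂ,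
        ∀ f : Fin (m + 1) → Fin d, ψ f = ∏ i : Fin (m + 1), vs i (f i)) → ψ = 0) := by
  refine ⟨finrank_orthogonal_span_range_quditCurve (by omega) hA, ?_, ?_⟩
  · rintro ψ hψ ⟨v, w, hvw⟩
    obtain rfl : ψ = consTensor v w := PiLp.ext hvw
    exact consTensor_eq_zero_of_mem_orthogonal hA hψ
  · rintro ψ hψ ⟨vs, hvs⟩
    obtain rfl : ψ = consTensor (vs 0) fun K => ∏ t, vs t.succ (K t) :=
      PiLp.ext fun f => by rw [hvs, Fin.prod_univ_succ]; rfl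
    exact consTensor_eq_zero_of_mem_orthogonal hA hψ

/-- Lemma 1 of the paper: for `d ≥ 2` and `n = m + 1 ≥ 2` parties and any
invertible `𝒜`, the orthocomplement `𝒱` of the span of the vectors
`(1,α,…,α^{d−1}) ⊗ 𝒜(1,α,…,α^{d^{n−1}−1})` has dimension `(d^{n−1} − 1)(d − 1)`, contains
no nonzero vector product across the cut `A₁|A₂⋯A_n`, and in particular contains no
nonzero fully product vector, i.e., it is a CES of the maximal possible GES dimension. -/
theorem qudit_CES_lemma (d m : ℕ) (hd : 2 ≤ d) (hm : 1 ≤ m)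
    (A : Matrix (Fin m → Fin d) (Fin m → Fin d) ℂ) (hA : IsUnit A.det) :
    Module.finrank ℂ
      ((Submodule.span ℂ (Set.range (quditCurve d m A)))ᗮ :
        Submodule ℂ (EuclideanSpace ℂ (Fin (m + 1) → Fin d))) = (d ^ m - 1) * (d - 1) ∧
    (∀ ψ ∈ (Submodule.span ℂ (Set.range (quditCurve d m A)))ᗮ,
      (∃ (v : Fin d → ℂ) (w : (Fin m → Fin d) → ℂ),
        ∀ f : Fin (m + 1) → Fin d, ψ f = v (f 0) * w (fun t => f t.succ)) → ψ = 0) ∧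
    (∀ ψ ∈ (Submodule.span ℂ (Set.range (quditCurve d m A)))ᗮ,
      (∃ vs : Fin (m + 1) → Fin d → ℂ,
        ∀ f : Fin (m + 1) → Fin d, ψ f = ∏ i : Fin (m + 1), vs i (f i)) → ψ = 0) :=
  qudit_CES_lemma_general d m hd A hA
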